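/- Let (B, F) be a Hopf datum in a 2-category K in which the 2-cocycle σ and the 2-cycle ρ' are trivial. Then: (a) the pre-multiplication of F is associative and the pre-comultiplication of B is coassociative, so F is a monad and B is a comonad; (b) the right F-action on B (defined via ψ) and the left B-coaction on F (defined via φ') are proper module/comodule structures; (c) the identities (2-cocycle condition), (normalized 2-cocycle), (2-cycle ρ'), (normalized 2-cycle ρ') hold trivially. -/
import Mathlib


open CategoryTheory Bicategory

set_option maxHeartbeats 1600000

namespace Stmt13

variable {K : Type*} [Bicategory K]

/-- `ψ : X ≫ T ⟶ T ≫ X` (paper: `TX ⟶ XT`) is a left monadic distributive law. -/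
def LeftMonadicDL {a : K} {T X : a ⟶ a} (m : T ≫ T ⟶ T) (u : 𝟙 a ⟶ T)
    (ψ : X ≫ T ⟶ T ≫ X) : Prop :=
  (X ◁ m ≫ ψ =
    (α_ X T T).inv ≫ ψ ▷ T ≫ (α_ T X T).hom ≫ T ◁ ψ ≫ (α_ T T X).inv ≫ m ▷ X) ∧
  ((ρ_ X).inv ≫ X ◁ u ≫ ψ = (λ_ X).inv ≫ u ▷ X)

/-- `ψ' : T ≫ X ⟶ X ≫ T` is a right monadic distributive law. -/
def RightMonadicDL {a : K} {T X : a ⟶ a} (m : T ≫ T ⟶ T) (u : 𝟙 a ⟶ T)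
    (ψ' : T ≫ X ⟶ X ≫ T) : Prop :=
  (m ▷ X ≫ ψ' =
    (α_ T T X).hom ≫ T ◁ ψ' ≫ (α_ T X T).inv ≫ ψ' ▷ T ≫ (α_ X T T).hom ≫ X ◁ m) ∧
  ((λ_ X).inv ≫ u ▷ X ≫ ψ' = (ρ_ X).inv ≫ X ◁ u)

/-- `φ : D ≫ X ⟶ X ≫ D` is a left comonadic distributive law. -/
def LeftComonadicDL {a : K} {D X : a ⟶ a} (d : D ⟶ D ≫ D) (e : D ⟶ 𝟙 a)
    (φ : D ≫ X ⟶ X ≫ D) : Prop :=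
  (d ▷ X ≫ (α_ D D X).hom ≫ D ◁ φ ≫ (α_ D X D).inv ≫ φ ▷ D ≫ (α_ X D D).hom =
    φ ≫ X ◁ d) ∧
  (φ ≫ X ◁ e ≫ (ρ_ X).hom = e ▷ X ≫ (λ_ X).hom)

/-- `φ' : X ≫ D ⟶ D ≫ X` is a right comonadic distributive law. -/
def RightComonadicDL {a : K} {D X : a ⟶ a} (d : D ⟶ D ≫ D) (e : D ⟶ 𝟙 a)
    (φ' : X ≫ D ⟶ D ≫ X) : Prop :=
  (X ◁ d ≫ (α_ X D D).inv ≫ φ' ▷ D ≫ (α_ D X D).hom ≫ D ◁ φ' ≫ (α_ D D X).inv =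
    φ' ≫ d ▷ X) ∧
  (φ' ≫ e ▷ X ≫ (λ_ X).hom = X ◁ e ≫ (ρ_ X).hom)

/-- A Hopf datum in a 2-category `K` (Definition 4.1 of the paper).  Conventions: the
paper composite `XY` is `Y ≫ X`; so `ψ : F ≫ B ⟶ B ≫ F`, the left `B`-action on `F` is
`lact : F ≫ B ⟶ F`, the right `F`-coaction on `B` is `rcoact : B ⟶ F ≫ B`, the right
`F`-action on `B` is `ract : F ≫ B ⟶ B`, the left `B`-coaction on `F` is
`lcoact : F ⟶ F ≫ B`, `σ : F ≫ F ⟶ B` and `ρ' : F ⟶ B ≫ B`. -/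
structure HopfDatum (a : K) where
  B : a ⟶ a
  F : a ⟶ a
  -- point 1: a monad B and a comonad F, with pre-comultiplication on B and
  -- pre-multiplication on F, and compatibilities
  mB : B ≫ B ⟶ B
  uB : 𝟙 a ⟶ B
  dB : B ⟶ B ≫ B
  epsB : B ⟶ 𝟙 a
  mF : F ≫ F ⟶ F
  uF : 𝟙 a ⟶ F
  dF : F ⟶ F ≫ F
  eF : F ⟶ 𝟙 a
  mB_assoc : (α_ B B B).hom ≫ B ◁ mB ≫ mB = mB ▷ B ≫ mB
  mB_unitl : uB ▷ B ≫ mB = (λ_ B).hom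
  mB_unitr : B ◁ uB ≫ mB = (ρ_ B).hom
  dF_coassoc : dF ≫ dF ▷ F ≫ (α_ F F F).hom = dF ≫ F ◁ dF
  dF_counitl : dF ≫ eF ▷ F = (λ_ F).inv
  dF_counitr : dF ≫ F ◁ eF = (ρ_ F).inv
  epsB_mul : mB ≫ epsB = B ◁ epsB ≫ (ρ_ B).hom ≫ epsB
  dB_unit : uB ≫ dB = (λ_ (𝟙 a)).inv ≫ uB ▷ 𝟙 a ≫ B ◁ uB
  epsB_unit : uB ≫ epsB = 𝟙 (𝟙 a)
  uF_comul : uF ≫ dF = (λ_ (𝟙 a)).inv ≫ uF ▷ 𝟙 a ≫ F ◁ uF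
  eF_mul : mF ≫ eF = F ◁ eF ≫ (ρ_ F).hom ≫ eF
  uF_counit : uF ≫ eF = 𝟙 (𝟙 a)
  -- point 2: the (co)action 2-cells
  lact : F ≫ B ⟶ F
  rcoact : B ⟶ F ≫ B
  ract : F ≫ B ⟶ B
  lcoact : F ⟶ F ≫ B
  -- lact makes F a proper left B-module, rcoact makes B a proper right F-comodule
  lact_assoc : (α_ F B B).inv ≫ lact ▷ B ≫ lact = F ◁ mB ≫ lact
  lact_unit : (ρ_ F).inv ≫ F ◁ uB ≫ lact = 𝟙 F
  rcoact_coassoc : rcoact ≫ F ◁ rcoact = rcoact ≫ dF ▷ B ≫ (α_ F F B).hom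
  rcoact_counit : rcoact ≫ eF ▷ B ≫ (λ_ B).hom = 𝟙 B
  -- (co)unit compatibilities of the four (co)actions
  lact_counit : lact ≫ eF = F ◁ epsB ≫ (ρ_ F).hom ≫ eF
  rcoact_unit : uB ≫ rcoact = (λ_ (𝟙 a)).inv ≫ uF ▷ 𝟙 a ≫ F ◁ uB
  ract_counit : ract ≫ epsB = F ◁ epsB ≫ (ρ_ F).hom ≫ eF
  lcoact_unit : uF ≫ lcoact = (λ_ (𝟙 a)).inv ≫ uF ▷ 𝟙 a ≫ F ◁ uB
  -- point 3: the 2-cells σ, ρ' and the distributive laws τ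
  sigma : F ≫ F ⟶ B
  rho : F ⟶ B ≫ B
  tBF : F ≫ B ⟶ B ≫ F
  tFB : B ≫ F ⟶ F ≫ B
  tBB : B ≫ B ⟶ B ≫ B
  tFF : F ≫ F ⟶ F ≫ F
  tBF_lm : LeftMonadicDL mB uB tBF
  tBF_rm : RightMonadicDL mF uF tBF
  tBF_lc : LeftComonadicDL dF eF tBF
  tBF_rc : RightComonadicDL dB epsB tBF
  tFB_lm : LeftMonadicDL mF uF tFB
  tFB_rm : RightMonadicDL mB uB tFB
  tFB_lc : LeftComonadicDL dB epsB tFB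
  tFB_rc : RightComonadicDL dF eF tFB
  tBB_lm : LeftMonadicDL mB uB tBB
  tBB_rm : RightMonadicDL mB uB tBB
  tBB_lc : LeftComonadicDL dB epsB tBB
  tBB_rc : RightComonadicDL dB epsB tBB
  tFF_lm : LeftMonadicDL mF uF tFF
  tFF_rm : RightMonadicDL mF uF tFF
  tFF_lc : LeftComonadicDL dF eF tFF
  tFF_rc : RightComonadicDL dF eF tFF
  -- point 4: ψ, φ', μ_M, Δ_C' are given by the explicit formulas
  psi : F ≫ B ⟶ B ≫ F
  psi_def : psi =
    dF ▷ B ≫ (F ≫ F) ◁ dB ≫ (α_ F F (B ≫ B)).hom ≫ F ◁ (α_ F B B).inv ≫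
      F ◁ (tBF ▷ B) ≫ F ◁ (α_ B F B).hom ≫ (α_ F B (F ≫ B)).inv ≫
      (F ≫ B) ◁ lact ≫ ract ▷ F
  phi : B ≫ F ⟶ F ≫ B
  phi_def : phi =
    rcoact ▷ F ≫ (F ≫ B) ◁ lcoact ≫ (α_ F B (F ≫ B)).hom ≫
      F ◁ (α_ B F B).inv ≫ F ◁ (tFB ▷ B) ≫ F ◁ (α_ F B B).hom ≫
      (α_ F F (B ≫ B)).inv ≫ mF ▷ (B ≫ B) ≫ F ◁ mB
  muM : F ≫ F ⟶ B ≫ F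
  muM_def : muM =
    F ◁ dF ≫ dF ▷ (F ≫ F) ≫ (F ≫ F) ◁ (lcoact ▷ F) ≫
      (α_ F F ((F ≫ B) ≫ F)).hom ≫ F ◁ (α_ F (F ≫ B) F).inv ≫
      F ◁ ((α_ F F B).inv ▷ F) ≫ F ◁ ((tFF ▷ B) ▷ F) ≫
      F ◁ ((α_ F F B).hom ▷ F) ≫ F ◁ ((F ◁ lact) ▷ F) ≫
      F ◁ (α_ F F F).hom ≫ F ◁ (F ◁ mF) ≫ (α_ F F F).inv ≫ sigma ▷ F
  deltaC : B ≫ F ⟶ B ≫ B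
  deltaC_def : deltaC =
    B ◁ rho ≫ dB ▷ (B ≫ B) ≫ (B ◁ rcoact) ▷ (B ≫ B) ≫
      (α_ (B ≫ (F ≫ B)) B B).inv ≫ ((α_ B (F ≫ B) B).hom ▷ B) ≫
      ((B ◁ (α_ F B B).hom) ▷ B) ≫ ((B ◁ (F ◁ tBB)) ▷ B) ≫
      ((B ◁ (α_ F B B).inv) ▷ B) ≫ ((B ◁ (ract ▷ B)) ▷ B) ≫
      (α_ B (B ≫ B) B).hom ≫ B ◁ (α_ B B B).hom ≫ B ◁ (B ◁ mB) ≫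
      (α_ B B B).inv ≫ mB ▷ B
  -- the identities of Definition 4.1 (equations (mod alg) – (weak coaction counity))
  modalg : F ◁ psi ≫ (α_ F B F).inv ≫ lact ▷ F ≫ mF =
    (α_ F F B).inv ≫ mF ▷ B ≫ lact
  modalg_unity : (λ_ B).inv ≫ uF ▷ B ≫ lact = epsB ≫ uF
  comodcoalg : dB ≫ B ◁ rcoact ≫ (α_ B F B).inv ≫ phi ▷ B =
    rcoact ≫ F ◁ dB ≫ (α_ F B B).inv
  comodcoalg_counity : rcoact ≫ F ◁ epsB ≫ (ρ_ F).hom = epsB ≫ uF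
  Fmodalg : (α_ F B B).inv ≫ psi ▷ B ≫ (α_ B F B).hom ≫ B ◁ ract ≫ mB =
    F ◁ mB ≫ ract
  Fmodalg_unit : (ρ_ F).inv ≫ F ◁ uB ≫ ract = eF ≫ uB
  Bcomodcoalg : dF ≫ lcoact ▷ F ≫ (α_ F B F).hom ≫ F ◁ phi =
    lcoact ≫ dF ▷ B ≫ (α_ F F B).hom
  Bcomodcoalg_counit : lcoact ≫ eF ▷ B ≫ (λ_ B).hom = eF ≫ uB
  weak_assoc : (α_ F F F).inv ≫ mF ▷ F ≫ mF =
    F ◁ muM ≫ (α_ F B F).inv ≫ lact ▷ F ≫ mF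
  weak_unityl : (λ_ F).inv ≫ uF ▷ F ≫ mF = 𝟙 F
  weak_unityr : (ρ_ F).inv ≫ F ◁ uF ≫ mF = 𝟙 F
  weak_coass : dB ≫ B ◁ dB =
    dB ≫ B ◁ rcoact ≫ (α_ B F B).inv ≫ deltaC ▷ B ≫ (α_ B B B).hom
  weak_counityl : dB ≫ B ◁ epsB ≫ (ρ_ B).hom = 𝟙 B
  weak_counityr : dB ≫ epsB ▷ B ≫ (λ_ B).hom = 𝟙 B
  weak_action : F ◁ psi ≫ (α_ F B F).inv ≫ psi ▷ F ≫ (α_ B F F).hom ≫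
      B ◁ sigma ≫ mB =
    (α_ F F B).inv ≫ muM ▷ B ≫ (α_ B F B).hom ≫ B ◁ ract ≫ mB
  weak_action_unity : (λ_ B).inv ≫ uF ▷ B ≫ ract = 𝟙 B
  weak_coaction : dF ≫ lcoact ▷ F ≫ (α_ F B F).hom ≫ F ◁ deltaC =
    dF ≫ rho ▷ F ≫ (α_ B B F).hom ≫ B ◁ phi ≫ (α_ B F B).inv ≫
      phi ▷ B ≫ (α_ F B B).hom
  weak_coaction_counity : dF ≫ lcoact ▷ F ≫ (α_ F B F).hom ≫ F ◁ (B ◁ eF) ≫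
      F ◁ (ρ_ B).hom ≫ F ◁ epsB ≫ (ρ_ F).hom = 𝟙 F


lemma muM_triv {a : K} {B F : a ⟶ a} (mF : F ≫ F ⟶ F) (dF : F ⟶ F ≫ F) (eF : F ⟶ 𝟙 a)
    (uB : 𝟙 a ⟶ B) (lact : F ≫ B ⟶ F) (lcoact : F ⟶ F ≫ B) (tFF : F ≫ F ⟶ F ≫ F)
    (hdF : dF ≫ eF ▷ F = (λ_ F).inv)
    (hlc : lcoact ≫ eF ▷ B ≫ (λ_ B).hom = eF ≫ uB)
    (htFF : tFF ≫ eF ▷ F ≫ (λ_ F).hom = F ◁ eF ≫ (ρ_ F).hom)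
    (hlu : (ρ_ F).inv ≫ F ◁ uB ≫ lact = 𝟙 F) :
    F ◁ dF ≫ dF ▷ (F ≫ F) ≫ (F ≫ F) ◁ (lcoact ▷ F) ≫
      (α_ F F ((F ≫ B) ≫ F)).hom ≫ F ◁ (α_ F (F ≫ B) F).inv ≫
      F ◁ ((α_ F F B).inv ▷ F) ≫ F ◁ ((tFF ▷ B) ▷ F) ≫
      F ◁ ((α_ F F B).hom ▷ F) ≫ F ◁ ((F ◁ lact) ▷ F) ≫
      F ◁ (α_ F F F).hom ≫ F ◁ (F ◁ mF) ≫ (α_ F F F).inv ≫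
      (F ◁ eF ≫ (ρ_ F).hom ≫ eF ≫ uB) ▷ F
    = mF ≫ (λ_ F).inv ≫ uB ▷ F := by
  calc
    _ = F ◁ dF ≫ dF ▷ (F ≫ F) ≫ (F ≫ F) ◁ (lcoact ▷ F) ≫
      (α_ F F ((F ≫ B) ≫ F)).hom ≫ F ◁ (α_ F (F ≫ B) F).inv ≫
      F ◁ (((α_ F F B).inv ≫ tFF ▷ B ≫ (α_ F F B).hom ≫ F ◁ lact) ▷ F) ≫
      F ◁ (α_ F F F).hom ≫ F ◁ (F ◁ mF ≫ eF ▷ F ≫ (λ_ F).hom) ≫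
      eF ▷ F ≫ uB ▷ F := by bicategory
    _ = F ◁ dF ≫ dF ▷ (F ≫ F) ≫ (F ≫ F) ◁ (lcoact ▷ F) ≫
      (α_ F F ((F ≫ B) ≫ F)).hom ≫ F ◁ (α_ F (F ≫ B) F).inv ≫
      F ◁ (((α_ F F B).inv ≫ tFF ▷ B ≫ (α_ F F B).hom ≫ F ◁ lact ≫
        eF ▷ F ≫ (λ_ F).hom) ▷ F) ≫
      F ◁ mF ≫ eF ▷ F ≫ uB ▷ F := by
        rw [whisker_exchange_assoc eF mF]; bicategory
    _ = F ◁ dF ≫ dF ▷ (F ≫ F) ≫ (F ≫ F) ◁ (lcoact ▷ F) ≫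
      (α_ F F ((F ≫ B) ≫ F)).hom ≫ F ◁ (α_ F (F ≫ B) F).inv ≫
      F ◁ (((α_ F F B).inv ≫ (tFF ≫ eF ▷ F ≫ (λ_ F).hom) ▷ B ≫ lact) ▷ F) ≫
      F ◁ mF ≫ eF ▷ F ≫ uB ▷ F := by
        rw [whisker_exchange_assoc eF lact]; bicategory
    _ = F ◁ dF ≫ dF ▷ (F ≫ F) ≫ (F ≫ F) ◁ ((lcoact ≫ eF ▷ B ≫ (λ_ B).hom) ▷ F) ≫
      (α_ F F (B ≫ F)).hom ≫ F ◁ (α_ F B F).inv ≫ F ◁ (lact ▷ F) ≫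
      F ◁ mF ≫ eF ▷ F ≫ uB ▷ F := by
        rw [htFF]; bicategory
    _ = F ◁ dF ≫ F ◁ ((eF ≫ uB) ▷ F) ≫ dF ▷ (B ≫ F) ≫
      (α_ F F (B ≫ F)).hom ≫ F ◁ (α_ F B F).inv ≫ F ◁ (lact ▷ F) ≫
      F ◁ mF ≫ eF ▷ F ≫ uB ▷ F := by
        rw [hlc, ← whisker_exchange_assoc dF ((eF ≫ uB) ▷ F)]
    _ = F ◁ (dF ≫ eF ▷ F) ≫ F ◁ (uB ▷ F) ≫ dF ▷ (B ≫ F) ≫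
      (α_ F F (B ≫ F)).hom ≫ F ◁ (α_ F B F).inv ≫ F ◁ (lact ▷ F) ≫
      F ◁ mF ≫ eF ▷ F ≫ uB ▷ F := by bicategory
    _ = F ◁ ((λ_ F).inv ≫ uB ▷ F) ≫ dF ▷ (B ≫ F) ≫
      (α_ F F (B ≫ F)).hom ≫ F ◁ (α_ F B F).inv ≫ F ◁ (lact ▷ F) ≫
      F ◁ mF ≫ eF ▷ F ≫ uB ▷ F := by
        rw [hdF]; bicategory
    _ = dF ▷ F ≫ (α_ F F F).hom ≫
      F ◁ (((ρ_ F).inv ≫ F ◁ uB ≫ lact) ▷ F) ≫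
      F ◁ mF ≫ eF ▷ F ≫ uB ▷ F := by
        rw [whisker_exchange_assoc dF ((λ_ F).inv ≫ uB ▷ F)]; bicategory
    _ = dF ▷ F ≫ (α_ F F F).hom ≫ F ◁ mF ≫ eF ▷ F ≫ uB ▷ F := by
        rw [hlu]; bicategory
    _ = (dF ≫ eF ▷ F) ▷ F ≫ ((λ_ F).hom ▷ F) ≫ mF ≫ (λ_ F).inv ≫ uB ▷ F := by
        rw [whisker_exchange_assoc eF mF]; bicategory
    _ = mF ≫ (λ_ F).inv ≫ uB ▷ F := by
        rw [hdF]; bicategory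

lemma deltaC_triv {a : K} {B F : a ⟶ a} (mB : B ≫ B ⟶ B) (uB : 𝟙 a ⟶ B) (dB : B ⟶ B ≫ B)
    (eF : F ⟶ 𝟙 a) (rcoact : B ⟶ F ≫ B) (ract : F ≫ B ⟶ B) (tBB : B ≫ B ⟶ B ≫ B)
    (hmBr : B ◁ uB ≫ mB = (ρ_ B).hom)
    (hru : (ρ_ F).inv ≫ F ◁ uB ≫ ract = eF ≫ uB)
    (htBB : (ρ_ B).inv ≫ B ◁ uB ≫ tBB = (λ_ B).inv ≫ uB ▷ B)
    (hrc : rcoact ≫ eF ▷ B ≫ (λ_ B).hom = 𝟙 B) :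
    B ◁ (eF ≫ (λ_ (𝟙 a)).inv ≫ uB ▷ 𝟙 a ≫ B ◁ uB) ≫ dB ▷ (B ≫ B) ≫
      (B ◁ rcoact) ▷ (B ≫ B) ≫
      (α_ (B ≫ F ≫ B) B B).inv ≫ ((α_ B (F ≫ B) B).hom ▷ B) ≫
      ((B ◁ (α_ F B B).hom) ▷ B) ≫ ((B ◁ (F ◁ tBB)) ▷ B) ≫
      ((B ◁ (α_ F B B).inv) ▷ B) ≫ ((B ◁ (ract ▷ B)) ▷ B) ≫
      (α_ B (B ≫ B) B).hom ≫ B ◁ (α_ B B B).hom ≫ B ◁ (B ◁ mB) ≫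
      (α_ B B B).inv ≫ mB ▷ B
    = B ◁ eF ≫ (ρ_ B).hom ≫ dB := by
  calc
    _ = B ◁ eF ≫ B ◁ (λ_ (𝟙 a)).inv ≫ B ◁ (uB ▷ 𝟙 a ≫ B ◁ uB) ≫ dB ▷ (B ≫ B) ≫
      (B ◁ rcoact) ▷ (B ≫ B) ≫
      (α_ (B ≫ F ≫ B) B B).inv ≫ ((α_ B (F ≫ B) B).hom ▷ B) ≫
      ((B ◁ (α_ F B B).hom) ▷ B) ≫ ((B ◁ (F ◁ tBB)) ▷ B) ≫
      ((B ◁ (α_ F B B).inv) ▷ B) ≫ ((B ◁ (ract ▷ B)) ▷ B) ≫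
      (α_ B (B ≫ B) B).hom ≫ B ◁ (α_ B B B).hom ≫ B ◁ (B ◁ mB) ≫
      (α_ B B B).inv ≫ mB ▷ B := by bicategory
    _ = B ◁ eF ≫ B ◁ (λ_ (𝟙 a)).inv ≫ dB ▷ (𝟙 a ≫ 𝟙 a) ≫
      (B ◁ rcoact) ▷ (𝟙 a ≫ 𝟙 a) ≫ (B ≫ F ≫ B) ◁ (uB ▷ 𝟙 a ≫ B ◁ uB) ≫
      (α_ (B ≫ F ≫ B) B B).inv ≫ ((α_ B (F ≫ B) B).hom ▷ B) ≫
      ((B ◁ (α_ F B B).hom) ▷ B) ≫ ((B ◁ (F ◁ tBB)) ▷ B) ≫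
      ((B ◁ (α_ F B B).inv) ▷ B) ≫ ((B ◁ (ract ▷ B)) ▷ B) ≫
      (α_ B (B ≫ B) B).hom ≫ B ◁ (α_ B B B).hom ≫ B ◁ (B ◁ mB) ≫
      (α_ B B B).inv ≫ mB ▷ B := by
        rw [whisker_exchange_assoc dB (uB ▷ 𝟙 a ≫ B ◁ uB),
          whisker_exchange_assoc (B ◁ rcoact) (uB ▷ 𝟙 a ≫ B ◁ uB)]
    _ = B ◁ eF ≫ B ◁ (λ_ (𝟙 a)).inv ≫ dB ▷ (𝟙 a ≫ 𝟙 a) ≫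
      (B ◁ rcoact) ▷ (𝟙 a ≫ 𝟙 a) ≫ (α_ (B ≫ F ≫ B) (𝟙 a) (𝟙 a)).inv ≫
      (((B ≫ F ≫ B) ◁ uB) ▷ 𝟙 a) ≫ ((B ≫ F ≫ B) ≫ B) ◁ uB ≫
      ((α_ B (F ≫ B) B).hom ≫ B ◁ (α_ F B B).hom ≫ B ◁ (F ◁ tBB) ≫
        B ◁ (α_ F B B).inv ≫ B ◁ (ract ▷ B)) ▷ B ≫
      (α_ B (B ≫ B) B).hom ≫ B ◁ (α_ B B B).hom ≫ B ◁ (B ◁ mB) ≫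
      (α_ B B B).inv ≫ mB ▷ B := by bicategory
    _ = B ◁ eF ≫ B ◁ (λ_ (𝟙 a)).inv ≫ dB ▷ (𝟙 a ≫ 𝟙 a) ≫
      (B ◁ rcoact) ▷ (𝟙 a ≫ 𝟙 a) ≫ (α_ (B ≫ F ≫ B) (𝟙 a) (𝟙 a)).inv ≫
      (((B ≫ F ≫ B) ◁ uB) ▷ 𝟙 a) ≫
      ((α_ B (F ≫ B) B).hom ≫ B ◁ (α_ F B B).hom ≫ B ◁ (F ◁ tBB) ≫
        B ◁ (α_ F B B).inv ≫ B ◁ (ract ▷ B)) ▷ (𝟙 a) ≫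
      (B ≫ B ≫ B) ◁ uB ≫
      (α_ B (B ≫ B) B).hom ≫ B ◁ (α_ B B B).hom ≫ B ◁ (B ◁ mB) ≫
      (α_ B B B).inv ≫ mB ▷ B := by
        rw [whisker_exchange_assoc ((α_ B (F ≫ B) B).hom ≫ B ◁ (α_ F B B).hom ≫
          B ◁ (F ◁ tBB) ≫ B ◁ (α_ F B B).inv ≫ B ◁ (ract ▷ B)) uB]
    _ = B ◁ eF ≫ B ◁ (λ_ (𝟙 a)).inv ≫ dB ▷ (𝟙 a ≫ 𝟙 a) ≫
      (B ◁ rcoact) ▷ (𝟙 a ≫ 𝟙 a) ≫ (α_ (B ≫ F ≫ B) (𝟙 a) (𝟙 a)).inv ≫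
      (((B ≫ F ≫ B) ◁ uB) ▷ 𝟙 a) ≫
      ((α_ B (F ≫ B) B).hom ≫ B ◁ (α_ F B B).hom ≫ B ◁ (F ◁ tBB) ≫
        B ◁ (α_ F B B).inv ≫ B ◁ (ract ▷ B)) ▷ (𝟙 a) ≫
      (ρ_ (B ≫ B ≫ B)).hom ≫ B ◁ (B ◁ ((ρ_ B).inv ≫ B ◁ uB ≫ mB)) ≫
      (α_ B B B).inv ≫ mB ▷ B := by bicategory
    _ = B ◁ eF ≫ B ◁ (λ_ (𝟙 a)).inv ≫ dB ▷ (𝟙 a ≫ 𝟙 a) ≫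
      (B ◁ rcoact) ▷ (𝟙 a ≫ 𝟙 a) ≫
      (B ≫ F ≫ B) ◁ (λ_ (𝟙 a)).hom ≫ (ρ_ (B ≫ F ≫ B)).hom ≫
      B ◁ (F ◁ ((ρ_ B).inv ≫ B ◁ uB ≫ tBB)) ≫
      B ◁ (α_ F B B).inv ≫ B ◁ (ract ▷ B) ≫
      (α_ B B B).inv ≫ mB ▷ B := by rw [hmBr]; bicategory
    _ = B ◁ eF ≫ B ◁ (λ_ (𝟙 a)).inv ≫ dB ▷ (𝟙 a ≫ 𝟙 a) ≫
      (B ◁ rcoact) ▷ (𝟙 a ≫ 𝟙 a) ≫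
      (B ≫ F ≫ B) ◁ (λ_ (𝟙 a)).hom ≫ (ρ_ (B ≫ F ≫ B)).hom ≫
      B ◁ (((ρ_ F).inv ≫ F ◁ uB ≫ ract) ▷ B) ≫
      (α_ B B B).inv ≫ mB ▷ B := by rw [htBB]; bicategory
    _ = B ◁ eF ≫ B ◁ (λ_ (𝟙 a)).inv ≫ dB ▷ (𝟙 a ≫ 𝟙 a) ≫
      ((B ◁ (rcoact ≫ eF ▷ B ≫ (λ_ B).hom)) ▷ (𝟙 a ≫ 𝟙 a)) ≫
      (B ≫ B) ◁ (λ_ (𝟙 a)).hom ≫ (ρ_ (B ≫ B)).hom ≫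
      ((ρ_ B).inv ≫ B ◁ uB ≫ mB) ▷ B := by rw [hru]; bicategory
    _ = B ◁ eF ≫ (ρ_ B).hom ≫ dB := by rw [hrc, hmBr]; bicategory

lemma psi_eF {a : K} {B F : a ⟶ a} (dF : F ⟶ F ≫ F) (eF : F ⟶ 𝟙 a) (epsB : B ⟶ 𝟙 a)
    (dB : B ⟶ B ≫ B) (lact : F ≫ B ⟶ F) (ract : F ≫ B ⟶ B) (tBF : F ≫ B ⟶ B ≫ F)
    (hdFr : dF ≫ F ◁ eF = (ρ_ F).inv)
    (hdBl : dB ≫ B ◁ epsB ≫ (ρ_ B).hom = 𝟙 B)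
    (hlce : lact ≫ eF = F ◁ epsB ≫ (ρ_ F).hom ≫ eF)
    (htBF : tBF ≫ B ◁ eF ≫ (ρ_ B).hom = eF ▷ B ≫ (λ_ B).hom) :
    dF ▷ B ≫ (F ≫ F) ◁ dB ≫ (α_ F F (B ≫ B)).hom ≫ F ◁ (α_ F B B).inv ≫
      F ◁ (tBF ▷ B) ≫ F ◁ (α_ B F B).hom ≫ (α_ F B (F ≫ B)).inv ≫
      (F ≫ B) ◁ lact ≫ ract ▷ F ≫ B ◁ eF ≫ (ρ_ B).hom = ract := by
  calc
    _ = dF ▷ B ≫ (F ≫ F) ◁ dB ≫ (α_ F F (B ≫ B)).hom ≫ F ◁ (α_ F B B).inv ≫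
      F ◁ (tBF ▷ B) ≫ F ◁ (α_ B F B).hom ≫ (α_ F B (F ≫ B)).inv ≫
      (F ≫ B) ◁ (lact ≫ eF) ≫ (ρ_ (F ≫ B)).hom ≫ ract := by
        rw [← whisker_exchange_assoc ract eF]; bicategory
    _ = dF ▷ B ≫ (F ≫ F) ◁ dB ≫ (α_ F F (B ≫ B)).hom ≫ F ◁ (α_ F B B).inv ≫
      F ◁ (tBF ▷ B) ≫ F ◁ (α_ B F B).hom ≫ (α_ F B (F ≫ B)).inv ≫
      (F ≫ B) ◁ (F ◁ epsB ≫ eF ▷ 𝟙 a ≫ (λ_ (𝟙 a)).hom) ≫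
      (ρ_ (F ≫ B)).hom ≫ ract := by rw [hlce]; bicategory
    _ = dF ▷ B ≫ (F ≫ F) ◁ dB ≫ (α_ F F (B ≫ B)).hom ≫ F ◁ (α_ F B B).inv ≫
      F ◁ ((tBF ≫ B ◁ eF ≫ (ρ_ B).hom) ▷ B) ≫ F ◁ (B ◁ epsB) ≫
      F ◁ (ρ_ B).hom ≫ ract := by
        rw [whisker_exchange_assoc eF epsB]; bicategory
    _ = dF ▷ B ≫ (F ≫ F) ◁ dB ≫ (F ◁ eF) ▷ (B ≫ B) ≫ (ρ_ F).hom ▷ (B ≫ B) ≫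
      F ◁ (B ◁ epsB) ≫ F ◁ (ρ_ B).hom ≫ ract := by rw [htBF]; bicategory
    _ = (dF ≫ F ◁ eF) ▷ B ≫ (ρ_ F).hom ▷ B ≫
      F ◁ (dB ≫ B ◁ epsB ≫ (ρ_ B).hom) ≫ ract := by
        rw [whisker_exchange_assoc (F ◁ eF) dB]; bicategory
    _ = ract := by rw [hdFr, hdBl]; bicategory

lemma phi_uB {a : K} {B F : a ⟶ a} (mF : F ≫ F ⟶ F) (mB : B ≫ B ⟶ B) (uF : 𝟙 a ⟶ F)
    (uB : 𝟙 a ⟶ B) (rcoact : B ⟶ F ≫ B) (lcoact : F ⟶ F ≫ B) (tFB : B ≫ F ⟶ F ≫ B)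
    (hrcu : uB ≫ rcoact = (λ_ (𝟙 a)).inv ≫ uF ▷ 𝟙 a ≫ F ◁ uB)
    (htFB : (λ_ F).inv ≫ uB ▷ F ≫ tFB = (ρ_ F).inv ≫ F ◁ uB)
    (hmFl : (λ_ F).inv ≫ uF ▷ F ≫ mF = 𝟙 F)
    (hmBl : uB ▷ B ≫ mB = (λ_ B).hom) :
    (λ_ F).inv ≫ uB ▷ F ≫ rcoact ▷ F ≫ (F ≫ B) ◁ lcoact ≫
      (α_ F B (F ≫ B)).hom ≫ F ◁ (α_ B F B).inv ≫ F ◁ (tFB ▷ B) ≫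
      F ◁ (α_ F B B).hom ≫ (α_ F F (B ≫ B)).inv ≫ mF ▷ (B ≫ B) ≫ F ◁ mB
    = lcoact := by
  calc
    _ = (λ_ F).inv ≫ ((uB ≫ rcoact) ▷ F) ≫ (F ≫ B) ◁ lcoact ≫
      (α_ F B (F ≫ B)).hom ≫ F ◁ (α_ B F B).inv ≫ F ◁ (tFB ▷ B) ≫
      F ◁ (α_ F B B).hom ≫ (α_ F F (B ≫ B)).inv ≫ mF ▷ (B ≫ B) ≫ F ◁ mB := by
        bicategory
    _ = (λ_ F).inv ≫ ((λ_ (𝟙 a)).inv ▷ F) ≫ ((uF ▷ 𝟙 a) ▷ F) ≫ ((F ◁ uB) ▷ F) ≫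
      (F ≫ B) ◁ lcoact ≫
      (α_ F B (F ≫ B)).hom ≫ F ◁ (α_ B F B).inv ≫ F ◁ (tFB ▷ B) ≫
      F ◁ (α_ F B B).hom ≫ (α_ F F (B ≫ B)).inv ≫ mF ▷ (B ≫ B) ≫ F ◁ mB := by
        rw [hrcu]; bicategory
    _ = (λ_ F).inv ≫ ((λ_ (𝟙 a)).inv ▷ F) ≫ ((uF ▷ 𝟙 a) ▷ F) ≫
      ((F ≫ 𝟙 a) ◁ lcoact) ≫ ((F ◁ uB) ▷ (F ≫ B)) ≫
      (α_ F B (F ≫ B)).hom ≫ F ◁ (α_ B F B).inv ≫ F ◁ (tFB ▷ B) ≫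
      F ◁ (α_ F B B).hom ≫ (α_ F F (B ≫ B)).inv ≫ mF ▷ (B ≫ B) ≫ F ◁ mB := by
        rw [← whisker_exchange_assoc (F ◁ uB) lcoact]
    _ = (λ_ F).inv ≫ ((λ_ (𝟙 a)).inv ▷ F) ≫ ((uF ▷ 𝟙 a) ▷ F) ≫
      ((F ≫ 𝟙 a) ◁ lcoact) ≫ ((ρ_ F).hom ▷ (F ≫ B)) ≫
      F ◁ (((λ_ F).inv ≫ uB ▷ F ≫ tFB) ▷ B) ≫
      F ◁ (α_ F B B).hom ≫ (α_ F F (B ≫ B)).inv ≫ mF ▷ (B ≫ B) ≫ F ◁ mB := by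
        bicategory
    _ = (λ_ F).inv ≫ ((λ_ (𝟙 a)).inv ▷ F) ≫ ((𝟙 a ≫ 𝟙 a) ◁ lcoact) ≫
      ((uF ▷ 𝟙 a) ▷ (F ≫ B)) ≫ ((ρ_ F).hom ▷ (F ≫ B)) ≫
      F ◁ (((ρ_ F).inv ≫ F ◁ uB) ▷ B) ≫
      F ◁ (α_ F B B).hom ≫ (α_ F F (B ≫ B)).inv ≫ mF ▷ (B ≫ B) ≫ F ◁ mB := by
        rw [htFB, ← whisker_exchange_assoc (uF ▷ (𝟙 a)) lcoact]
    _ = lcoact ≫ (λ_ (F ≫ B)).inv ≫ uF ▷ (F ≫ B) ≫ (α_ F F B).inv ≫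
      (F ≫ F) ◁ ((λ_ B).inv ≫ uB ▷ B) ≫ mF ▷ (B ≫ B) ≫ F ◁ mB := by bicategory
    _ = lcoact ≫ (λ_ (F ≫ B)).inv ≫ uF ▷ (F ≫ B) ≫ (α_ F F B).inv ≫
      mF ▷ B ≫ F ◁ ((λ_ B).inv ≫ uB ▷ B) ≫ F ◁ mB := by
        rw [whisker_exchange_assoc mF ((λ_ B).inv ≫ uB ▷ B)]
    _ = lcoact ≫ (((λ_ F).inv ≫ uF ▷ F ≫ mF) ▷ B) ≫
      F ◁ ((λ_ B).inv ≫ uB ▷ B ≫ mB) := by bicategory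
    _ = lcoact := by rw [hmFl, hmBl]; bicategory

lemma colA {a : K} {B F X : a ⟶ a} (mB : B ≫ B ⟶ B) (uB : 𝟙 a ⟶ B) (eF : F ⟶ 𝟙 a)
    (psi : F ≫ B ⟶ B ≫ F) (ract : F ≫ B ⟶ B) (χ : X ⟶ B ≫ F)
    (hmBr : B ◁ uB ≫ mB = (ρ_ B).hom)
    (hL4 : psi ≫ B ◁ eF ≫ (ρ_ B).hom = ract) :
    F ◁ χ ≫ (α_ F B F).inv ≫ psi ▷ F ≫ (α_ B F F).hom ≫
      B ◁ (F ◁ eF ≫ (ρ_ F).hom ≫ eF ≫ uB) ≫ mB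
    = F ◁ (χ ≫ B ◁ eF ≫ (ρ_ B).hom) ≫ ract := by
  calc
    _ = F ◁ χ ≫ (α_ F B F).inv ≫ psi ▷ F ≫ ((B ≫ F) ◁ eF) ≫
      (ρ_ (B ≫ F)).hom ≫ B ◁ eF ≫ B ◁ uB ≫ mB := by bicategory
    _ = F ◁ χ ≫ (α_ F B F).inv ≫ ((F ≫ B) ◁ eF) ≫ psi ▷ (𝟙 a) ≫
      (ρ_ (B ≫ F)).hom ≫ B ◁ eF ≫ B ◁ uB ≫ mB := by
        rw [← whisker_exchange_assoc psi eF]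
    _ = F ◁ (χ ≫ B ◁ eF ≫ (ρ_ B).hom) ≫ psi ≫ B ◁ eF ≫ (ρ_ B).hom := by
        rw [hmBr]; bicategory
    _ = F ◁ (χ ≫ B ◁ eF ≫ (ρ_ B).hom) ≫ ract := by rw [hL4]

/-- in a Hopf datum `(B, F)` in which the 2-cocycle `σ` and the 2-cycle `ρ'`
are trivial: (a) the pre-multiplication of `F` is associative and the pre-comultiplication
of `B` is coassociative, so `F` is a monad and `B` is a comonad; (b) the right `F`-action
`↼` on `B` and the left `B`-coaction on `F` are proper module/comodule structures;
(c) the 2-cocycle and 2-cycle identities (2-cocycle condition), (normalized 2-cocycle),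
(2-cycle ρ'), (normalized 2-cycle ρ') hold (trivially). -/
theorem hopf_datum_trivial_cocycles {a : K} (H : HopfDatum a)
    (hσ : H.sigma = H.F ◁ H.eF ≫ (ρ_ H.F).hom ≫ H.eF ≫ H.uB)
    (hρ : H.rho = H.eF ≫ (λ_ (𝟙 a)).inv ≫ H.uB ▷ 𝟙 a ≫ H.B ◁ H.uB) :
    -- (a) F is a monad and B is a comonad
    ((α_ H.F H.F H.F).inv ≫ H.mF ▷ H.F ≫ H.mF = H.F ◁ H.mF ≫ H.mF) ∧
    (H.dB ≫ H.B ◁ H.dB = H.dB ≫ H.dB ▷ H.B ≫ (α_ H.B H.B H.B).hom) ∧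
    -- (b) ↼ is a proper right F-module structure on B,
    --     and the left B-coaction on F is a proper comodule structure
    ((α_ H.F H.F H.B).inv ≫ H.mF ▷ H.B ≫ H.ract = H.F ◁ H.ract ≫ H.ract) ∧
    ((λ_ H.B).inv ≫ H.uF ▷ H.B ≫ H.ract = 𝟙 H.B) ∧
    (H.lcoact ≫ H.F ◁ H.dB = H.lcoact ≫ H.lcoact ▷ H.B ≫ (α_ H.F H.B H.B).hom) ∧
    (H.lcoact ≫ H.F ◁ H.epsB ≫ (ρ_ H.F).hom = 𝟙 H.F) ∧
    -- (c) the 2-cocycle condition and normalization for σ …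
    ((α_ H.F H.F H.F).inv ≫ H.muM ▷ H.F ≫ (α_ H.B H.F H.F).hom ≫
        H.B ◁ H.sigma ≫ H.mB =
      H.F ◁ H.muM ≫ (α_ H.F H.B H.F).inv ≫ H.psi ▷ H.F ≫ (α_ H.B H.F H.F).hom ≫
        H.B ◁ H.sigma ≫ H.mB) ∧
    ((λ_ H.F).inv ≫ H.uF ▷ H.F ≫ H.sigma = H.eF ≫ H.uB) ∧
    ((ρ_ H.F).inv ≫ H.F ◁ H.uF ≫ H.sigma = H.eF ≫ H.uB) ∧
    -- … and the 2-cycle condition and normalization for ρ'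
    (H.dF ≫ H.rho ▷ H.F ≫ (α_ H.B H.B H.F).hom ≫ H.B ◁ H.phi ≫
        (α_ H.B H.F H.B).inv ≫ H.deltaC ▷ H.B ≫ (α_ H.B H.B H.B).hom =
      H.dF ≫ H.rho ▷ H.F ≫ (α_ H.B H.B H.F).hom ≫ H.B ◁ H.deltaC) ∧
    (H.rho ≫ H.B ◁ H.epsB ≫ (ρ_ H.B).hom = H.eF ≫ H.uB) ∧
    (H.rho ≫ H.epsB ▷ H.B ≫ (λ_ H.B).hom = H.eF ≫ H.uB) := by
  obtain ⟨B, F, mB, uB, dB, epsB, mF, uF, dF, eF, mB_assoc, mB_unitl, mB_unitr,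
    dF_coassoc, dF_counitl, dF_counitr, epsB_mul, dB_unit, epsB_unit, uF_comul,
    eF_mul, uF_counit, lact, rcoact, ract, lcoact, lact_assoc, lact_unit,
    rcoact_coassoc, rcoact_counit, lact_counit, rcoact_unit, ract_counit,
    lcoact_unit, sigma, rho, tBF, tFB, tBB, tFF, tBF_lm, tBF_rm, tBF_lc, tBF_rc,
    tFB_lm, tFB_rm, tFB_lc, tFB_rc, tBB_lm, tBB_rm, tBB_lc, tBB_rc, tFF_lm,
    tFF_rm, tFF_lc, tFF_rc, psi, psi_def, phi, phi_def, muM, muM_def, deltaC,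
    deltaC_def, modalg, modalg_unity, comodcoalg, comodcoalg_counity, Fmodalg,
    Fmodalg_unit, Bcomodcoalg, Bcomodcoalg_counit, weak_assoc, weak_unityl,
    weak_unityr, weak_coass, weak_counityl, weak_counityr, weak_action,
    weak_action_unity, weak_coaction, weak_coaction_counity⟩ := H
  dsimp only at *
  -- the four structure lemmas
  have L1 : muM = mF ≫ (λ_ F).inv ≫ uB ▷ F := by
    rw [muM_def, hσ]
    exact muM_triv mF dF eF uB lact lcoact tFF dF_counitl Bcomodcoalg_counit
      tFF_rc.2 lact_unit
  have L2 : deltaC = B ◁ eF ≫ (ρ_ B).hom ≫ dB := by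
    rw [deltaC_def, hρ]
    exact deltaC_triv mB uB dB eF rcoact ract tBB mB_unitr Fmodalg_unit
      tBB_lm.2 rcoact_counit
  have L4 : psi ≫ B ◁ eF ≫ (ρ_ B).hom = ract := by
    rw [psi_def]; simp only [Category.assoc]
    exact psi_eF dF eF epsB dB lact ract tBF dF_counitr weak_counityl
      lact_counit tBF_lc.2
  have L6 : (λ_ F).inv ≫ uB ▷ F ≫ phi = lcoact := by
    rw [phi_def]
    exact phi_uB mF mB uF uB rcoact lcoact tFB rcoact_unit tFB_rm.2
      weak_unityl mB_unitl
  -- (a) associativity of mF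
  have G1 : (α_ F F F).inv ≫ mF ▷ F ≫ mF = F ◁ mF ≫ mF := by
    have wa := weak_assoc
    rw [L1] at wa
    have r : F ◁ (mF ≫ (λ_ F).inv ≫ uB ▷ F) ≫ (α_ F B F).inv ≫ lact ▷ F ≫ mF
        = F ◁ mF ≫ mF := by
      calc _ = F ◁ mF ≫ (((ρ_ F).inv ≫ F ◁ uB ≫ lact) ▷ F) ≫ mF := by bicategory
        _ = F ◁ mF ≫ mF := by rw [lact_unit]; bicategory
    rw [r] at wa; exact wa
  -- (a) coassociativity of dB
  have G2 : dB ≫ B ◁ dB = dB ≫ dB ▷ B ≫ (α_ B B B).hom := by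
    have wc := weak_coass
    rw [L2] at wc
    have r : dB ≫ B ◁ rcoact ≫ (α_ B F B).inv ≫
        ((B ◁ eF ≫ (ρ_ B).hom ≫ dB) ▷ B) ≫ (α_ B B B).hom
        = dB ≫ dB ▷ B ≫ (α_ B B B).hom := by
      calc _ = dB ≫ B ◁ (rcoact ≫ eF ▷ B ≫ (λ_ B).hom) ≫ dB ▷ B ≫
          (α_ B B B).hom := by bicategory
        _ = dB ≫ dB ▷ B ≫ (α_ B B B).hom := by rw [rcoact_counit]; bicategory
    rw [r] at wc; exact wc
  -- (b) ract associativity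
  have G3 : (α_ F F B).inv ≫ mF ▷ B ≫ ract = F ◁ ract ≫ ract := by
    have wa := weak_action
    rw [hσ, L1] at wa
    have cA : F ◁ psi ≫ (α_ F B F).inv ≫ psi ▷ F ≫ (α_ B F F).hom ≫
        B ◁ (F ◁ eF ≫ (ρ_ F).hom ≫ eF ≫ uB) ≫ mB = F ◁ ract ≫ ract :=
      (colA mB uB eF psi ract psi mB_unitr L4).trans (by rw [L4])
    rw [cA] at wa
    have cB : (α_ F F B).inv ≫ ((mF ≫ (λ_ F).inv ≫ uB ▷ F) ▷ B) ≫
        (α_ B F B).hom ≫ B ◁ ract ≫ mB = (α_ F F B).inv ≫ mF ▷ B ≫ ract := by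
      calc _ = (α_ F F B).inv ≫ mF ▷ B ≫ (λ_ (F ≫ B)).inv ≫ uB ▷ (F ≫ B) ≫
          B ◁ ract ≫ mB := by bicategory
        _ = (α_ F F B).inv ≫ mF ▷ B ≫ (λ_ (F ≫ B)).inv ≫ (𝟙 a) ◁ ract ≫
          uB ▷ B ≫ mB := by rw [← whisker_exchange_assoc uB ract]
        _ = (α_ F F B).inv ≫ mF ▷ B ≫ ract ≫ (λ_ B).inv ≫ uB ▷ B ≫ mB := by
          bicategory
        _ = (α_ F F B).inv ≫ mF ▷ B ≫ ract := by rw [mB_unitl]; bicategory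
    rw [cB] at wa
    exact wa.symm
  -- (b) ract unit
  have G4 : (λ_ B).inv ≫ uF ▷ B ≫ ract = 𝟙 B := weak_action_unity
  -- (b) lcoact: helper C0
  have C0 : dF ≫ lcoact ▷ F ≫ (α_ F B F).hom ≫ F ◁ (B ◁ eF) ≫ F ◁ (ρ_ B).hom
      = lcoact := by
    calc _ = dF ≫ lcoact ▷ F ≫ ((F ≫ B) ◁ eF) ≫ (ρ_ (F ≫ B)).hom := by
          bicategory
      _ = dF ≫ F ◁ eF ≫ (ρ_ F).hom ≫ lcoact := by
          rw [← whisker_exchange_assoc lcoact eF]; bicategory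
      _ = lcoact := by rw [reassoc_of% dF_counitr]; bicategory
  have swap1 : (λ_ F).inv ≫ uB ▷ F ≫ B ◁ lcoact =
      lcoact ≫ (λ_ (F ≫ B)).inv ≫ uB ▷ (F ≫ B) := by
    rw [← whisker_exchange]; bicategory
  have D0 : dF ≫ rho ▷ F ≫ (α_ B B F).hom ≫ B ◁ phi =
      (λ_ F).inv ≫ uB ▷ F ≫ B ◁ lcoact := by
    calc _ = dF ≫ eF ▷ F ≫ (((λ_ (𝟙 a)).inv ≫ uB ▷ 𝟙 a ≫ B ◁ uB) ▷ F) ≫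
        (α_ B B F).hom ≫ B ◁ phi := by rw [hρ]; bicategory
      _ = (λ_ F).inv ≫ (((λ_ (𝟙 a)).inv ≫ uB ▷ 𝟙 a) ▷ F) ≫
        (α_ B (𝟙 a) F).hom ≫ B ◁ (λ_ F).hom ≫
        B ◁ ((λ_ F).inv ≫ uB ▷ F ≫ phi) := by
          rw [reassoc_of% dF_counitl]; bicategory
      _ = (λ_ F).inv ≫ uB ▷ F ≫ B ◁ lcoact := by rw [L6]; bicategory
  have G5 : lcoact ≫ F ◁ dB = lcoact ≫ lcoact ▷ B ≫ (α_ F B B).hom := by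
    have wc := weak_coaction
    rw [L2] at wc
    have r : dF ≫ lcoact ▷ F ≫ (α_ F B F).hom ≫
        F ◁ (B ◁ eF ≫ (ρ_ B).hom ≫ dB) = lcoact ≫ F ◁ dB := by
      calc _ = (dF ≫ lcoact ▷ F ≫ (α_ F B F).hom ≫ F ◁ (B ◁ eF) ≫
            F ◁ (ρ_ B).hom) ≫ F ◁ dB := by bicategory
        _ = lcoact ≫ F ◁ dB := by rw [C0]
    rw [r] at wc
    have r2 : dF ≫ rho ▷ F ≫ (α_ B B F).hom ≫ B ◁ phi ≫ (α_ B F B).inv ≫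
        phi ▷ B ≫ (α_ F B B).hom = lcoact ≫ lcoact ▷ B ≫ (α_ F B B).hom := by
      rw [reassoc_of% D0, reassoc_of% swap1]
      calc _ = lcoact ≫ (((λ_ F).inv ≫ uB ▷ F ≫ phi) ▷ B) ≫ (α_ F B B).hom := by
            bicategory
        _ = lcoact ≫ lcoact ▷ B ≫ (α_ F B B).hom := by rw [L6]
    rw [r2] at wc
    exact wc
  -- (b) lcoact counit
  have G6 : lcoact ≫ F ◁ epsB ≫ (ρ_ F).hom = 𝟙 F := by
    have h := weak_coaction_counity
    rw [reassoc_of% C0] at h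
    exact h
  -- (c) 2-cocycle condition
  have G7 : (α_ F F F).inv ≫ muM ▷ F ≫ (α_ B F F).hom ≫ B ◁ sigma ≫ mB =
      F ◁ muM ≫ (α_ F B F).inv ≫ psi ▷ F ≫ (α_ B F F).hom ≫
        B ◁ sigma ≫ mB := by
    have L7' : (λ_ F).inv ≫ uB ▷ F ≫ B ◁ eF ≫ (ρ_ B).hom = eF ≫ uB := by
      rw [← whisker_exchange_assoc uB eF]; bicategory
    have E1 : (α_ F F F).inv ≫ muM ▷ F ≫ (α_ B F F).hom ≫ B ◁ sigma ≫ mB =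
        (α_ F F F).inv ≫ mF ▷ F ≫ mF ≫ eF ≫ uB := by
      rw [hσ, L1]
      calc _ = (α_ F F F).inv ≫ mF ▷ F ≫ (λ_ (F ≫ F)).inv ≫ uB ▷ (F ≫ F) ≫
            B ◁ (F ◁ eF ≫ (ρ_ F).hom ≫ eF ≫ uB) ≫ mB := by bicategory
        _ = (α_ F F F).inv ≫ mF ▷ F ≫ (λ_ (F ≫ F)).inv ≫
            (𝟙 a) ◁ (F ◁ eF ≫ (ρ_ F).hom ≫ eF ≫ uB) ≫ uB ▷ B ≫ mB := by
              rw [← whisker_exchange_assoc uB (F ◁ eF ≫ (ρ_ F).hom ≫ eF ≫ uB)]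
        _ = (α_ F F F).inv ≫ mF ▷ F ≫ F ◁ eF ≫ (ρ_ F).hom ≫ eF ≫ uB ≫
            (λ_ B).inv ≫ uB ▷ B ≫ mB := by bicategory
        _ = (α_ F F F).inv ≫ mF ▷ F ≫ F ◁ eF ≫ (ρ_ F).hom ≫ eF ≫ uB := by
              rw [mB_unitl]; bicategory
        _ = (α_ F F F).inv ≫ mF ▷ F ≫ mF ≫ eF ≫ uB := by
              rw [← reassoc_of% eF_mul]
    have E2 : F ◁ muM ≫ (α_ F B F).inv ≫ psi ▷ F ≫ (α_ B F F).hom ≫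
        B ◁ sigma ≫ mB = F ◁ mF ≫ mF ≫ eF ≫ uB := by
      rw [hσ, L1]
      calc _ = F ◁ ((mF ≫ (λ_ F).inv ≫ uB ▷ F) ≫ B ◁ eF ≫ (ρ_ B).hom) ≫
            ract := colA mB uB eF psi ract (mF ≫ (λ_ F).inv ≫ uB ▷ F)
              mB_unitr L4
        _ = F ◁ (mF ≫ eF ≫ uB) ≫ ract := by
              simp only [Category.assoc]; rw [L7']
        _ = F ◁ mF ≫ F ◁ eF ≫ (ρ_ F).hom ≫
            ((ρ_ F).inv ≫ F ◁ uB ≫ ract) := by bicategory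
        _ = F ◁ mF ≫ F ◁ eF ≫ (ρ_ F).hom ≫ eF ≫ uB := by rw [Fmodalg_unit]
        _ = F ◁ mF ≫ mF ≫ eF ≫ uB := by rw [← reassoc_of% eF_mul]
    rw [E1, E2, reassoc_of% G1]
  -- (c) normalized 2-cocycle
  have G8 : (λ_ F).inv ≫ uF ▷ F ≫ sigma = eF ≫ uB := by
    rw [hσ]
    calc _ = eF ≫ (λ_ (𝟙 a)).inv ≫ (ρ_ (𝟙 a)).hom ≫ (uF ≫ eF) ≫ uB := by
          rw [← whisker_exchange_assoc uF eF]; bicategory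
      _ = eF ≫ uB := by rw [uF_counit]; bicategory
  have G9 : (ρ_ F).inv ≫ F ◁ uF ≫ sigma = eF ≫ uB := by
    rw [hσ]
    calc _ = (ρ_ F).inv ≫ F ◁ (uF ≫ eF) ≫ (ρ_ F).hom ≫ eF ≫ uB := by
          bicategory
      _ = eF ≫ uB := by rw [uF_counit]; bicategory
  -- (c) 2-cycle condition
  have L8 : (λ_ F).inv ≫ uB ▷ F ≫ deltaC = eF ≫ uB ≫ dB := by
    rw [L2]
    rw [← whisker_exchange_assoc uB eF]; bicategory
  have D0' : dF ≫ rho ▷ F ≫ (α_ B B F).hom ≫ B ◁ deltaC =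
      (λ_ F).inv ≫ uB ▷ F ≫ B ◁ (eF ≫ uB ≫ dB) := by
    calc _ = dF ≫ eF ▷ F ≫ (((λ_ (𝟙 a)).inv ≫ uB ▷ 𝟙 a ≫ B ◁ uB) ▷ F) ≫
        (α_ B B F).hom ≫ B ◁ deltaC := by rw [hρ]; bicategory
      _ = (λ_ F).inv ≫ (((λ_ (𝟙 a)).inv ≫ uB ▷ 𝟙 a) ▷ F) ≫
        (α_ B (𝟙 a) F).hom ≫ B ◁ (λ_ F).hom ≫
        B ◁ ((λ_ F).inv ≫ uB ▷ F ≫ deltaC) := by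
          rw [reassoc_of% dF_counitl]; bicategory
      _ = (λ_ F).inv ≫ uB ▷ F ≫ B ◁ (eF ≫ uB ≫ dB) := by rw [L8]; bicategory
  have G10 : dF ≫ rho ▷ F ≫ (α_ B B F).hom ≫ B ◁ phi ≫ (α_ B F B).inv ≫
      deltaC ▷ B ≫ (α_ B B B).hom =
      dF ≫ rho ▷ F ≫ (α_ B B F).hom ≫ B ◁ deltaC := by
    have h1 : dF ≫ rho ▷ F ≫ (α_ B B F).hom ≫ B ◁ phi ≫ (α_ B F B).inv ≫
        deltaC ▷ B ≫ (α_ B B B).hom =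
        eF ≫ (λ_ (𝟙 a)).inv ≫ ((uB ≫ dB) ▷ (𝟙 a)) ≫ ((B ≫ B) ◁ uB) ≫
        (α_ B B B).hom := by
      rw [reassoc_of% D0, reassoc_of% swap1]
      calc _ = lcoact ≫ (((λ_ F).inv ≫ uB ▷ F ≫ deltaC) ▷ B) ≫
            (α_ B B B).hom := by bicategory
        _ = lcoact ≫ ((eF ≫ uB ≫ dB) ▷ B) ≫ (α_ B B B).hom := by rw [L8]
        _ = (lcoact ≫ eF ▷ B ≫ (λ_ B).hom) ≫ (λ_ B).inv ≫
            ((uB ≫ dB) ▷ B) ≫ (α_ B B B).hom := by bicategory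
        _ = eF ≫ uB ≫ (λ_ B).inv ≫ ((uB ≫ dB) ▷ B) ≫ (α_ B B B).hom := by
            rw [Bcomodcoalg_counit]; simp only [Category.assoc]
        _ = eF ≫ (λ_ (𝟙 a)).inv ≫ ((𝟙 a) ◁ uB) ≫ ((uB ≫ dB) ▷ B) ≫
            (α_ B B B).hom := by bicategory
        _ = eF ≫ (λ_ (𝟙 a)).inv ≫ ((uB ≫ dB) ▷ (𝟙 a)) ≫ ((B ≫ B) ◁ uB) ≫
            (α_ B B B).hom := by rw [whisker_exchange_assoc (uB ≫ dB) uB]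
    have h2 : dF ≫ rho ▷ F ≫ (α_ B B F).hom ≫ B ◁ deltaC =
        eF ≫ (λ_ (𝟙 a)).inv ≫ (uB ▷ (𝟙 a)) ≫ (B ◁ (uB ≫ dB)) := by
      rw [D0']
      calc _ = eF ≫ (λ_ (𝟙 a)).inv ≫ ((𝟙 a) ◁ (uB ≫ dB)) ≫
            uB ▷ (B ≫ B) := by rw [← whisker_exchange]; bicategory
        _ = eF ≫ (λ_ (𝟙 a)).inv ≫ (uB ▷ (𝟙 a)) ≫ (B ◁ (uB ≫ dB)) := by
            rw [whisker_exchange uB (uB ≫ dB)]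
    rw [h1, h2]
    simp only [dB_unit]
    bicategory
  -- (c) normalized 2-cycle
  have G11 : rho ≫ B ◁ epsB ≫ (ρ_ B).hom = eF ≫ uB := by
    rw [hρ]
    calc _ = eF ≫ (λ_ (𝟙 a)).inv ≫ uB ▷ (𝟙 a) ≫ B ◁ (uB ≫ epsB) ≫
          (ρ_ B).hom := by bicategory
      _ = eF ≫ uB := by rw [epsB_unit]; bicategory
  have G12 : rho ≫ epsB ▷ B ≫ (λ_ B).hom = eF ≫ uB := by
    rw [hρ]
    calc _ = eF ≫ (λ_ (𝟙 a)).inv ≫ ((uB ≫ epsB) ▷ (𝟙 a)) ≫ ((𝟙 a) ◁ uB) ≫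
          (λ_ B).hom := by
            simp only [Category.assoc]
            rw [whisker_exchange_assoc epsB uB]; bicategory
      _ = eF ≫ uB := by rw [epsB_unit]; bicategory
  exact ⟨G1, G2, G3, G4, G5, G6, G7, G8, G9, G10, G11, G12⟩
end Stmt13
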